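/- arXiv:1309.6770 — 9 statements merged into one kernel-verified Lean document; each statement's English description precedes it below -/
import Mathlib

section
/- If ψ : Y → ℝ satisfies ∑_{j=1}^n ψ(y_j + y) = ∑_{j=1}^n ψ(y_j − y) for all y₁,…,y_n, y ∈ Y with ∑ y_j = 0 (n ≥ 3), and ψ(−y) = ψ(y) for all y, then ψ satisfies ψ(y₁+y₂+y) − ψ(y₁+y₂−y) = ψ(y₁+y) − ψ(y₁−y) + ψ(y₂+y) − ψ(y₂−y) for all y₁, y₂, y ∈ Y. -/
/-! Apply the hypothesis to the zero-sum family `(y₁, y₂, -(y₁ + y₂), 0, …, 0)`: the `n - 3` zero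
entries contribute `(n - 3) (ψ y - ψ (-y)) = 0` by evenness, and evenness also turns
`ψ (-(y₁ + y₂) ± y)` into `ψ (y₁ + y₂ ∓ y)`. -/

open Matrix in
theorem Fin.sum_comp_vecCons_three_zero {M : Type*} [AddCommMonoid M] {Y : Type*} [Zero Y]
    (m : ℕ) (g : Y → M) (a b c : Y) :
    ∑ j : Fin (m + 3), g (vecCons a (vecCons b (vecCons c 0)) j) =
      g a + g b + g c + m • g 0 := by
  simp only [Fin.sum_univ_succ, cons_val_zero, cons_val_succ, Pi.zero_apply, Finset.sum_const,
    Finset.card_univ, Fintype.card_fin]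
  abel

theorem sum_triple_add_eq_sum_triple_sub {Y : Type*} [AddCommGroup Y] (m : ℕ) (ψ : Y → ℝ)
    (heq : ∀ (ys : Fin (m + 3) → Y) (y : Y), (∑ j, ys j) = 0 →
      (∑ j, ψ (ys j + y)) = ∑ j, ψ (ys j - y))
    {a b c : Y} (habc : a + b + c = 0) (y : Y) :
    ψ (a + y) + ψ (b + y) + ψ (c + y) + m * ψ y =
      ψ (a - y) + ψ (b - y) + ψ (c - y) + m * ψ (-y) := by
  have h := heq (Matrix.vecCons a (Matrix.vecCons b (Matrix.vecCons c 0))) y <| by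
    simpa using (Fin.sum_comp_vecCons_three_zero m id a b c).trans (by simpa using habc)
  rwa [Fin.sum_comp_vecCons_three_zero m (fun x => ψ (x + y)),
    Fin.sum_comp_vecCons_three_zero m (fun x => ψ (x - y)), zero_add, zero_sub,
    nsmul_eq_mul, nsmul_eq_mul] at h

theorem stmt2 {Y : Type*} [AddCommGroup Y] (n : ℕ) (hn : 3 ≤ n) (ψ : Y → ℝ)
    (heq : ∀ (ys : Fin n → Y) (y : Y), (∑ j, ys j) = 0 →
      (∑ j, ψ (ys j + y)) = ∑ j, ψ (ys j - y))
    (hsym : ∀ y : Y, ψ (-y) = ψ y) :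
    ∀ y₁ y₂ y : Y, ψ (y₁ + y₂ + y) - ψ (y₁ + y₂ - y) =
      ψ (y₁ + y) - ψ (y₁ - y) + (ψ (y₂ + y) - ψ (y₂ - y)) := by
  intro y₁ y₂ y
  obtain ⟨m, rfl⟩ : ∃ m, n = m + 3 := ⟨n - 3, by omega⟩
  have h := sum_triple_add_eq_sum_triple_sub m ψ heq (add_neg_cancel (y₁ + y₂)) y
  have h_add : ψ (-(y₁ + y₂) + y) = ψ (y₁ + y₂ - y) := by
    rw [← hsym, neg_add', neg_neg]
  have h_sub : ψ (-(y₁ + y₂) - y) = ψ (y₁ + y₂ + y) := by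
    rw [← hsym, neg_sub, sub_neg_eq_add, add_comm]
  rw [h_add, h_sub, hsym] at h
  linarith
end

section
/- If ψ : Y → ℝ satisfies the equation ψ(y₁+y₂+y) − ψ(y₁+y₂−y) = ψ(y₁+y) − ψ(y₁−y) + ψ(y₂+y) − ψ(y₂−y) for all y₁, y₂, y ∈ Y, then Δ_k³ Δ_{2h} ψ(y) = 0 for all k, h, y ∈ Y, where Δ_h ψ(y) = ψ(y+h) − ψ(y). -/
/-! The equation at `(y₁, y₂, y) = (z + h, k, h)` says that `Δ_k Δ_{2h} ψ` is the constant
`ψ (k + h) - ψ (k - h)`, so two further differences kill it. -/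

/-- The forward difference operator `Δ_h ψ (y) = ψ (y + h) - ψ y`. -/
def fdiff {Y : Type*} [Add Y] (h : Y) (ψ : Y → ℝ) : Y → ℝ :=
  fun y => ψ (y + h) - ψ y

theorem fdiff_eq_zero_of_forall_eq {Y : Type*} [Add Y] {f : Y → ℝ} {c : ℝ}
    (hf : ∀ z, f z = c) (k z : Y) : fdiff k f z = 0 := by
  simp only [fdiff, hf, sub_self]

theorem fdiff_fdiff_two_nsmul_eq {Y : Type*} [AddCommGroup Y] {ψ : Y → ℝ}
    (hψ : ∀ y₁ y₂ y : Y, ψ (y₁ + y₂ + y) - ψ (y₁ + y₂ - y) =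
      ψ (y₁ + y) - ψ (y₁ - y) + (ψ (y₂ + y) - ψ (y₂ - y)))
    (k h z : Y) : fdiff k (fdiff (2 • h) ψ) z = ψ (k + h) - ψ (k - h) := by
  have H := hψ (z + h) k h
  rw [show z + h + k + h = z + k + 2 • h by abel, show z + h + k - h = z + k by abel,
    show z + h + h = z + 2 • h by abel, add_sub_cancel_right] at H
  simp only [fdiff]
  linarith

theorem stmt3 {Y : Type*} [AddCommGroup Y] (ψ : Y → ℝ)
    (h1 : ∀ y₁ y₂ y : Y, ψ (y₁ + y₂ + y) - ψ (y₁ + y₂ - y) =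
      ψ (y₁ + y) - ψ (y₁ - y) + (ψ (y₂ + y) - ψ (y₂ - y))) :
    ∀ k h y : Y, fdiff k (fdiff k (fdiff k (fdiff (2 • h) ψ))) y = 0 := by
  intro k h y
  have hsecond : ∀ z, fdiff k (fdiff k (fdiff (2 • h) ψ)) z = 0 :=
    fdiff_eq_zero_of_forall_eq (fdiff_fdiff_two_nsmul_eq h1 k h) k
  exact fdiff_eq_zero_of_forall_eq hsecond k y
end

section
/- Let Y = Y₁ × Y₂ be a product of abelian groups and m : Y → ℂ a function of absolute value 1 satisfying m(u+v)·m(u−v) = m(u)² for all u, v ∈ Y, and m(y)^n = 1 for all y with n odd. If the restrictions y₁ ↦ m(y₁, 0) and y₂ ↦ m(0, y₂) are group homomorphisms into the unit circle, then m itself is a group homomorphism: m(y₁, y₂) = m(y₁,0)·m(0,y₂) for all y₁, y₂. -/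
/-!
Putting `u + v` and `u - v` into the functional equation, and using `m (2u) = m u ^ 2` (the
equation at `v = u`, once `m 0 = 1`), gives `m (u + v) ^ 2 = (m u * m v) ^ 2`. The two values
also agree in `n`-th power, both being `1`, and `n` is coprime to `2`, so they are equal.
-/

lemma eq_of_sq_eq_sq_of_pow_eq_pow_of_odd {α : Type*} [CommGroupWithZero α] {a b : α} {n : ℕ}
    (hn : Odd n) (h2 : a ^ 2 = b ^ 2) (hpow : a ^ n = b ^ n) : a = b := by
  rcases eq_or_ne b 0 with rfl | hb
  · simpa using h2
  have hquot : (a / b) ^ 2 = 1 ∧ (a / b) ^ n = 1 := by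
    simp only [div_pow, h2, hpow, div_self (pow_ne_zero _ hb), and_self]
  exact (div_eq_one_iff_eq hb).mp
    ((pow_eq_one_iff_of_coprime (Nat.coprime_two_left.mpr hn)).mp hquot)

section FunctionalEquation

variable {G M : Type*} [AddCommGroup G] {m : G → M}

lemma sq_map_add_eq_sq_mul [CommMonoid M] (h0 : m 0 = 1)
    (heq : ∀ u v, m (u + v) * m (u - v) = m u ^ 2) (u v : G) :
    m (u + v) ^ 2 = (m u * m v) ^ 2 := by
  have hdouble : ∀ w, m (w + w) = m w ^ 2 := fun w => by
    simpa only [sub_self, h0, mul_one] using heq w w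
  have h := heq (u + v) (u - v)
  rw [show u + v + (u - v) = u + u by abel, show u + v - (u - v) = v + v by abel,
    hdouble, hdouble] at h
  rw [← h, mul_pow]

lemma map_add_eq_mul_of_map_add_mul_map_sub [CommGroupWithZero M] (h0 : m 0 = 1)
    (heq : ∀ u v, m (u + v) * m (u - v) = m u ^ 2) {n : ℕ} (hn : Odd n)
    (hroot : ∀ y, m y ^ n = 1) (u v : G) :
    m (u + v) = m u * m v :=
  eq_of_sq_eq_sq_of_pow_eq_pow_of_odd hn (sq_map_add_eq_sq_mul h0 heq u v)
    (by rw [mul_pow, hroot, hroot, hroot, mul_one])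

end FunctionalEquation

theorem stmt7_general {Y₁ Y₂ : Type*} [AddCommGroup Y₁] [AddCommGroup Y₂]
    (m : Y₁ × Y₂ → ℂ)
    (heq : ∀ u v : Y₁ × Y₂, m (u + v) * m (u - v) = m u ^ 2)
    (n : ℕ) (hodd : Odd n) (hroot : ∀ y, m y ^ n = 1)
    (hres1 : ∀ a b : Y₁, m (a + b, 0) = m (a, 0) * m (b, 0)) :
    (∀ u v : Y₁ × Y₂, m (u + v) = m u * m v) ∧
    (∀ (y₁ : Y₁) (y₂ : Y₂), m (y₁, y₂) = m (y₁, 0) * m (0, y₂)) := by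
  have hm0_ne : m 0 ≠ 0 := fun h => by
    simpa [h, hodd.pos.ne'] using hroot 0
  have hm0 : m 0 = 1 := by
    have h := hres1 0 0
    simp only [add_zero, Prod.mk_zero_zero] at h
    exact (mul_eq_left₀ hm0_ne).mp h.symm
  have hhom := map_add_eq_mul_of_map_add_mul_map_sub hm0 heq hodd hroot
  refine ⟨hhom, fun y₁ y₂ => ?_⟩
  rw [← hhom, Prod.mk_add_mk, add_zero, zero_add]

theorem stmt7 {Y₁ Y₂ : Type*} [AddCommGroup Y₁] [AddCommGroup Y₂]
    (m : Y₁ × Y₂ → ℂ) (habs : ∀ y, ‖m y‖ = 1)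
    (heq : ∀ u v : Y₁ × Y₂, m (u + v) * m (u - v) = m u ^ 2)
    (n : ℕ) (hodd : Odd n) (hroot : ∀ y, m y ^ n = 1)
    (hres1 : ∀ a b : Y₁, m (a + b, 0) = m (a, 0) * m (b, 0))
    (hres2 : ∀ a b : Y₂, m ((0 : Y₁), a + b) = m (0, a) * m (0, b)) :
    (∀ u v : Y₁ × Y₂, m (u + v) = m u * m v) ∧
    (∀ (y₁ : Y₁) (y₂ : Y₂), m (y₁, y₂) = m (y₁, 0) * m (0, y₂)) :=
  stmt7_general m heq n hodd hroot hres1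
end

section
/- Suppose b : Y₁ × Y₂ → ℂ satisfies b(u+v)·b(u−v) = b(u)² for all u, v, together with b(y₁, 0) = b(0, y₂) = 1 for all y₁ ∈ Y₁, y₂ ∈ Y₂. Then b(2y₁, y₂) = 1 for all y₁ ∈ Y₁ and y₂ ∈ Y₂. -/
theorem stmt8 {Y₁ Y₂ : Type*} [AddCommGroup Y₁] [AddCommGroup Y₂]
    (b : Y₁ × Y₂ → ℂ)
    (heq : ∀ u v : Y₁ × Y₂, b (u + v) * b (u - v) = b u ^ 2)
    (h1 : ∀ y₁ : Y₁, b (y₁, 0) = 1) (h2 : ∀ y₂ : Y₂, b ((0 : Y₁), y₂) = 1) :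
    ∀ (y₁ : Y₁) (y₂ : Y₂), b (2 • y₁, y₂) = 1 := by
  intro y₁ y₂
  -- u = (y₁, 0), v = (-y₁, -y₂) give u + v = (0, -y₂) and u - v = (2y₁, y₂).
  simpa [h1, h2, two_smul] using heq (y₁, 0) (-y₁, -y₂)
end

section
/- Let l : Y → ℂ satisfy |l(y)| = 1, l(−y) = conj(l(y)), l(y)^n = 1, and ∏_{j=1}^n l(y_j + y) = ∏_{j=1}^n l(y_j − y) whenever ∑_{j=1}^n y_j = 0 (n ≥ 3). Then m(y) := l(y)² satisfies m(u+v)·m(u−v) = m(u)² for all u, v ∈ Y. -/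
/-! Feed the relation the tuple `(v, -v, 0, …, 0)` and the shift `u`. Using `l (-y) = conj (l y)`,
the two sides become `a` and `conj a` for `a = l (u + v) * l (u - v) * l u ^ (n - 2)`. As `|a| = 1`,
this forces `a ^ 2 = a * conj a = 1`, and `l u ^ (2 * n) = 1` turns `l u ^ (2 * n - 4)` into
`l u ^ (-4)`. -/

open ComplexConjugate

theorem RCLike.sq_eq_one_of_conj_eq_self {K : Type*} [RCLike K] {z : K} (hz : ‖z‖ = 1)
    (hconj : conj z = z) : z ^ 2 = 1 := by
  rw [sq, ← congrArg (z * ·) hconj, RCLike.mul_conj, hz]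
  simp

theorem sq_eq_pow_four_of_sq_mul_pow_eq_one {M : Type*} [CommMonoid M] {p c : M} {m : ℕ}
    (hp : (p * c ^ m) ^ 2 = 1) (hc : c ^ (m + 2) = 1) : p ^ 2 = c ^ 4 :=
  calc p ^ 2 = p ^ 2 * (c ^ (m + 2)) ^ 2 := by rw [hc, one_pow, mul_one]
    _ = (p * c ^ m) ^ 2 * c ^ 4 := by
      rw [mul_pow, mul_assoc, ← pow_mul, ← pow_mul, ← pow_add, add_mul]
    _ = c ^ 4 := by rw [hp, one_mul]

theorem conj_eq_self_of_prod_add_eq_prod_sub {Y : Type*} [AddCommGroup Y] {l : Y → ℂ}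
    (hsym : ∀ y : Y, l (-y) = conj (l y)) {m : ℕ}
    (heq : ∀ (ys : Fin (m + 2) → Y) (y : Y), (∑ j, ys j) = 0 →
      (∏ j, l (ys j + y)) = ∏ j, l (ys j - y)) (u v : Y) :
    conj (l (u + v) * l (u - v) * l u ^ m) = l (u + v) * l (u - v) * l u ^ m := by
  have h := heq (Fin.cons v (Fin.cons (-v) 0)) u (by simp [Fin.sum_univ_succ])
  have hvu : v - u = -(u - v) := (neg_sub u v).symm
  have hnvu : -v - u = -(u + v) := by abel
  simp only [Fin.prod_univ_succ, Fin.cons_zero, Fin.cons_succ, Pi.zero_apply, zero_add, zero_sub,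
    Finset.prod_const, Finset.card_univ, Fintype.card_fin, hvu, hnvu, hsym, add_comm v u,
    neg_add_eq_sub] at h
  rw [map_mul, map_mul, map_pow]
  linear_combination -h

theorem stmt12 {Y : Type*} [AddCommGroup Y] (l : Y → ℂ)
    (habs : ∀ y, ‖l y‖ = 1)
    (hsym : ∀ y : Y, l (-y) = starRingEnd ℂ (l y))
    (n : ℕ) (hn : 3 ≤ n) (hroot : ∀ y, l y ^ n = 1)
    (heq : ∀ (ys : Fin n → Y) (y : Y), (∑ j, ys j) = 0 →
      (∏ j, l (ys j + y)) = ∏ j, l (ys j - y)) :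
    ∀ u v : Y, l (u + v) ^ 2 * l (u - v) ^ 2 = (l u ^ 2) ^ 2 := by
  intro u v
  obtain ⟨m, rfl⟩ : ∃ m, n = m + 2 := ⟨n - 2, by omega⟩
  have hsq : (l (u + v) * l (u - v) * l u ^ m) ^ 2 = 1 :=
    RCLike.sq_eq_one_of_conj_eq_self (by simp [habs]) (conj_eq_self_of_prod_add_eq_prod_sub hsym heq u v)
  rw [← mul_pow, ← pow_mul]
  exact sq_eq_pow_four_of_sq_mul_pow_eq_one hsq (hroot u)
end

section
/- Let μ be a probability measure on a locally compact abelian group X, and suppose the characteristic function μ̂ satisfies ∏_{j=1}^n μ̂(y_j + y) = ∏_{j=1}^n μ̂(y_j − y) whenever ∑ y_j = 0, with μ̂(y)^n > 0 for all y (n ≥ 3). Then the function l(y) = μ̂(y)/|μ̂(y)| satisfies l(−y) = conj(l(y)) and l(y)^n = 1 for all y ∈ Y. -/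
open MeasureTheory

theorem integral_addChar_neg_apply {X : Type*} [AddCommGroup X] [MeasurableSpace X]
    (μ : Measure X) (y : AddChar X Circle) :
    ∫ x, ((-y) x : ℂ) ∂μ = starRingEnd ℂ (∫ x, (y x : ℂ) ∂μ) := by
  rw [← integral_conj]
  congr 1 with x
  rw [AddChar.neg_apply, AddChar.map_neg_eq_inv, Circle.coe_inv_eq_conj]

theorem Complex.div_norm_pow_eq_one_of_pow_eq_ofReal {z : ℂ} {n : ℕ} {c : ℝ} (hc : 0 < c)
    (h : z ^ n = c) : (z / ‖z‖) ^ n = 1 := by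
  have hnorm : ‖z‖ ^ n = c := by
    rw [← norm_pow, h, Complex.norm_real, Real.norm_of_nonneg hc.le]
  rw [div_pow, ← Complex.ofReal_pow, hnorm, h, div_self (Complex.ofReal_ne_zero.mpr hc.ne')]

theorem stmt14_general {X : Type*} [AddCommGroup X] [MeasurableSpace X]
    (μ : Measure X)
    (μhat : AddChar X Circle → ℂ)
    (hμhat : ∀ y : AddChar X Circle, μhat y = ∫ x, (y x : ℂ) ∂μ)
    (n : ℕ)
    (hpos : ∀ y, ∃ c : ℝ, 0 < c ∧ μhat y ^ n = (c : ℂ))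
    (l : AddChar X Circle → ℂ)
    (hl : ∀ y, l y = μhat y / (‖μhat y‖ : ℂ)) :
    (∀ y, l (-y) = starRingEnd ℂ (l y)) ∧ (∀ y, l y ^ n = 1) := by
  have hconj : ∀ y, μhat (-y) = starRingEnd ℂ (μhat y) := fun y => by
    rw [hμhat, hμhat, integral_addChar_neg_apply]
  refine ⟨fun y => ?_, fun y => ?_⟩
  · rw [hl, hl, hconj, map_div₀, Complex.conj_ofReal, Complex.norm_conj]
  · obtain ⟨c, hc, hcn⟩ := hpos y
    rw [hl]
    exact Complex.div_norm_pow_eq_one_of_pow_eq_ofReal hc hcn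

theorem stmt14 {X : Type*} [AddCommGroup X] [TopologicalSpace X] [IsTopologicalAddGroup X]
    [LocallyCompactSpace X] [MeasurableSpace X] [BorelSpace X]
    (μ : Measure X) [IsProbabilityMeasure μ]
    (μhat : AddChar X Circle → ℂ)
    (hμhat : ∀ y : AddChar X Circle, μhat y = ∫ x, (y x : ℂ) ∂μ)
    (hne : ∀ y, μhat y ≠ 0)
    (n : ℕ) (hn : 3 ≤ n)
    (heq : ∀ (ys : Fin n → AddChar X Circle) (y : AddChar X Circle),
      (∑ j, ys j) = 0 → (∏ j, μhat (ys j + y)) = ∏ j, μhat (ys j - y))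
    (hpos : ∀ y, ∃ c : ℝ, 0 < c ∧ μhat y ^ n = (c : ℂ))
    (l : AddChar X Circle → ℂ)
    (hl : ∀ y, l y = μhat y / (‖μhat y‖ : ℂ)) :
    (∀ y, l (-y) = starRingEnd ℂ (l y)) ∧ (∀ y, l y ^ n = 1) :=
  stmt14_general μ μhat hμhat n hpos l hl
end

section
/- Let ψ : Y → ℝ satisfy Δ_k³ Δ_{2h} ψ = 0 for all k, h ∈ Y (i.e. for fixed h, Δ_{2h}ψ is a polynomial of degree ≤ 2), and suppose Δ_k² Δ_{2h} ψ(y) = 0 for all k, y in the subgroup 2Y and all h ∈ Y (i.e. Δ_{2h}ψ restricted to 2Y is a polynomial of degree ≤ 1). Then Δ_k² Δ_{2h} ψ(y) = 0 for all k, h, y ∈ Y. -/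
/-!
Write `f = Δ_{2h} ψ`. Since `Δ_c³ f = 0`, the second difference `Δ_c² f` is `c`-periodic, so
`Δ_{2c}² f = (T_c + 1)² Δ_c² f = 4 Δ_c² f` (`T` the shift); the hypothesis on `2Y` therefore says that every
`Δ_c² f` vanishes on `2Y`. Polarizing `Δ_{a+b}²` spreads this to the mixed differences `Δ_a Δ_b f`
on `b + 2Y` and then on `2Y`, and splitting `Δ_k = T_y Δ_{k-y} + Δ_y` reaches every point `y`.
-/

section FiniteDifferences

variable {Y : Type*} [AddCommGroup Y]

theorem fdiff_add (a b : Y) (g : Y → ℝ) (w : Y) :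
    fdiff (a + b) g w = fdiff a g (w + b) + fdiff b g w := by
  simp only [fdiff]
  rw [show w + (a + b) = w + b + a by abel]
  ring

theorem fdiff_comm (a b : Y) (g : Y → ℝ) (w : Y) :
    fdiff a (fdiff b g) w = fdiff b (fdiff a g) w := by
  simp only [fdiff]
  rw [show w + a + b = w + b + a by abel]
  ring

theorem periodic_of_fdiff_eq_zero {c : Y} {g : Y → ℝ} (h : ∀ w, fdiff c g w = 0) :
    Function.Periodic g c :=
  fun w => sub_eq_zero.mp (h w)

theorem fdiff_two_nsmul (c : Y) (g : Y → ℝ) (w : Y) :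
    fdiff (2 • c) g w = fdiff c g (w + c) + fdiff c g w := by
  rw [two_nsmul, fdiff_add]

theorem fdiff_fdiff_add_add (a b : Y) (f : Y → ℝ) (w : Y) :
    fdiff (a + b) (fdiff (a + b) f) w =
      fdiff a (fdiff a f) (w + b + b) + 2 * fdiff a (fdiff b f) (w + b)
        + fdiff b (fdiff b f) w := by
  have hinner : ∀ c v, fdiff c (fdiff (a + b) f) v =
      fdiff a (fdiff c f) (v + b) + fdiff b (fdiff c f) v := fun c v => by
    rw [fdiff_comm, fdiff_add, fdiff_comm a, fdiff_comm b]
  rw [fdiff_add, hinner, hinner, fdiff_comm b a]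
  ring

theorem fdiff_fdiff_two_nsmul {c : Y} {f : Y → ℝ}
    (hper : Function.Periodic (fdiff c (fdiff c f)) c) (w : Y) :
    fdiff (2 • c) (fdiff (2 • c) f) w = 4 * fdiff c (fdiff c f) w := by
  have hinner : ∀ v, fdiff c (fdiff (2 • c) f) v =
      fdiff c (fdiff c f) (v + c) + fdiff c (fdiff c f) v := fun v => by
    rw [fdiff_comm, fdiff_two_nsmul]
  rw [fdiff_two_nsmul, hinner, hinner, hper (w + c), hper w]
  ring

end FiniteDifferences

section VanishingOnEvenPoints

variable {Y : Type*} [AddCommGroup Y] {f : Y → ℝ}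
  (hf : ∀ c z : Y, fdiff c (fdiff c f) (2 • z) = 0)
include hf

theorem fdiff_fdiff_two_nsmul_add_eq_zero (a b z : Y) :
    fdiff a (fdiff b f) (2 • z + b) = 0 := by
  have hpol := fdiff_fdiff_add_add a b f (2 • z)
  rw [hf, show 2 • z + b + b = 2 • (z + b) by abel, hf, hf] at hpol
  linarith

theorem fdiff_fdiff_two_nsmul_eq_zero (a b z : Y) :
    fdiff a (fdiff b f) (2 • z) = 0 := by
  have hsplit := fdiff_add (a - b) b (fdiff b f) (2 • z)
  rwa [sub_add_cancel, fdiff_fdiff_two_nsmul_add_eq_zero hf, hf, add_zero] at hsplit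

theorem fdiff_fdiff_self_eq_zero_of_two_nsmul (k y : Y) : fdiff k (fdiff k f) y = 0 := by
  have hsplit := fdiff_add (k - y) y (fdiff k f) y
  have hmixed := fdiff_fdiff_two_nsmul_add_eq_zero hf k y 0
  rw [smul_zero, zero_add] at hmixed
  rwa [sub_add_cancel, ← two_nsmul, fdiff_fdiff_two_nsmul_eq_zero hf, fdiff_comm y k, hmixed,
    add_zero] at hsplit

end VanishingOnEvenPoints

theorem stmt17 {Y : Type*} [AddCommGroup Y] (ψ : Y → ℝ)
    (h3 : ∀ k h y : Y, fdiff k (fdiff k (fdiff k (fdiff (2 • h) ψ))) y = 0)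
    (h2 : ∀ (k y h : Y),
      fdiff (2 • k) (fdiff (2 • k) (fdiff (2 • h) ψ)) (2 • y) = 0) :
    ∀ k h y : Y, fdiff k (fdiff k (fdiff (2 • h) ψ)) y = 0 := by
  intro k h y
  refine fdiff_fdiff_self_eq_zero_of_two_nsmul (fun c z => ?_) k y
  have hquad := fdiff_fdiff_two_nsmul (periodic_of_fdiff_eq_zero (h3 c h)) (2 • z)
  rw [h2] at hquad
  linarith
end

section
/- The function f : ℤ → ℝ defined by f(m) = exp(−m²) if m is even and f(m) = exp(−m² + ε) if m is odd satisfies ∏_{j=1}^n f(m_j + k) = ∏_{j=1}^n f(m_j − k) for all integers m₁,…,m_n, k with ∑ m_j = 0, for every n ≥ 1 and every ε ∈ ℝ. -/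
/-! Write `f m = exp (-m²) · c(m)` with `c` depending only on the parity of `m`. Since
`(m + k)² - (m - k)² = 4km`, the Gaussian factors on both sides agree once `∑ mⱼ = 0`, and
`mⱼ + k` and `mⱼ - k` always have the same parity, so the factors `c` agree termwise. -/

open Finset

theorem sum_add_sq_eq_sum_sub_sq {ι R : Type*} [CommRing R] (s : Finset ι) (m : ι → R) (k : R)
    (h : ∑ i ∈ s, m i = 0) : ∑ i ∈ s, (m i + k) ^ 2 = ∑ i ∈ s, (m i - k) ^ 2 := by
  have hsq : ∀ i, (m i + k) ^ 2 = (m i - k) ^ 2 + 4 * k * m i := fun i => by ring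
  simp only [hsq, sum_add_distrib, ← mul_sum, h, mul_zero, add_zero]

theorem prod_exp_neg_add_sq_eq_prod_exp_neg_sub_sq {ι : Type*} (s : Finset ι) (m : ι → ℝ)
    (k : ℝ) (h : ∑ i ∈ s, m i = 0) :
    ∏ i ∈ s, Real.exp (-(m i + k) ^ 2) = ∏ i ∈ s, Real.exp (-(m i - k) ^ 2) := by
  simp only [← Real.exp_sum, sum_neg_distrib, sum_add_sq_eq_sum_sub_sq s m k h]

theorem stmt18_general (ε : ℝ) (f : ℤ → ℝ)
    (hf : ∀ m : ℤ, f m = if Even m then Real.exp (-(m : ℝ) ^ 2)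
      else Real.exp (-(m : ℝ) ^ 2 + ε))
    (n : ℕ) :
    ∀ (ms : Fin n → ℤ) (k : ℤ), (∑ j, ms j) = 0 →
      (∏ j, f (ms j + k)) = ∏ j, f (ms j - k) := by
  intro ms k hsum
  have hf' : ∀ m : ℤ, f m = Real.exp (-(m : ℝ) ^ 2) * if Even m then 1 else Real.exp ε := by
    intro m
    rw [hf]
    split_ifs <;> simp [Real.exp_add]
  have hparity : ∀ j, Even (ms j + k) ↔ Even (ms j - k) := fun j => by
    rw [Int.even_add, Int.even_sub]
  have hsumR : ∑ j, (ms j : ℝ) = 0 := by exact_mod_cast hsum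
  simp only [hf', prod_mul_distrib, Int.cast_add, Int.cast_sub, hparity,
    prod_exp_neg_add_sq_eq_prod_exp_neg_sub_sq _ _ _ hsumR]

theorem stmt18 (ε : ℝ) (f : ℤ → ℝ)
    (hf : ∀ m : ℤ, f m = if Even m then Real.exp (-(m : ℝ) ^ 2)
      else Real.exp (-(m : ℝ) ^ 2 + ε))
    (n : ℕ) (hn : 1 ≤ n) :
    ∀ (ms : Fin n → ℤ) (k : ℤ), (∑ j, ms j) = 0 →
      (∏ j, f (ms j + k)) = ∏ j, f (ms j - k) :=
  stmt18_general ε f hf n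
end

section
/- The function f : ℤ → ℂ defined by f(m) = exp(−a m² + i(π/2) m³) (a > 0) satisfies ∏_{j=1}^4 f(m_j + k) = ∏_{j=1}^4 f(m_j − k) for all integers m₁, m₂, m₃, m₄, k with m₁+m₂+m₃+m₄ = 0, and f(m)⁴ > 0 for all m ∈ ℤ. -/
/-!
Write `f = exp ∘ φ` with `φ(m) = -a m² + (πi/2) m³`. Then
`φ(m + k) - φ(m - k) = -4akm + πi (3km² + k³)`, so for `n` points with `∑ mⱼ = 0` the exponents
of the two products differ by `πi (3k ∑ mⱼ² + n k³)`. Since `m² ≡ m (mod 2)`, the sum `∑ mⱼ²` is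
even, so for even `n` this difference lies in `2πiℤ`. Likewise `4φ(m) = -4am² + 2πi m³`.
-/

open Complex Finset

theorem Int.even_sum_sq_iff {ι : Type*} (s : Finset ι) (m : ι → ℤ) :
    Even (∑ i ∈ s, m i ^ 2) ↔ Even (∑ i ∈ s, m i) := by
  have hdiff : Even (∑ i ∈ s, (m i ^ 2 - m i)) :=
    Finset.even_sum _ fun i _ ↦ by simp [Int.even_sub, Int.even_pow]
  rw [Finset.sum_sub_distrib] at hdiff
  constructor <;> intro h
  · simpa using h.sub hdiff
  · simpa using hdiff.add h

noncomputable def cubicGaussian (a : ℂ) (m : ℤ) : ℂ :=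
  exp (-a * (m : ℂ) ^ 2 + I * (Real.pi / 2 : ℝ) * (m : ℂ) ^ 3)

theorem cubicGaussian_pow_four (a : ℂ) (m : ℤ) :
    cubicGaussian a m ^ 4 = exp (-4 * a * (m : ℂ) ^ 2) := by
  rw [cubicGaussian, ← exp_nat_mul]
  have hexp : ((4 : ℕ) : ℂ) * (-a * (m : ℂ) ^ 2 + I * (Real.pi / 2 : ℝ) * (m : ℂ) ^ 3) =
      -4 * a * (m : ℂ) ^ 2 + ((m ^ 3 : ℤ) : ℂ) * (2 * Real.pi * I) := by
    push_cast; ring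
  rw [hexp, exp_add, exp_int_mul_two_pi_mul_I, mul_one]

theorem prod_cubicGaussian_add_eq_prod_sub {ι : Type*} (a : ℂ) (s : Finset ι) (m : ι → ℤ)
    (k : ℤ) (hcard : Even #s) (hsum : ∑ i ∈ s, m i = 0) :
    ∏ i ∈ s, cubicGaussian a (m i + k) = ∏ i ∈ s, cubicGaussian a (m i - k) := by
  obtain ⟨t, ht⟩ := (Int.even_sum_sq_iff s m).2 (hsum ▸ Even.zero)
  obtain ⟨r, hr⟩ := hcard
  have hsumC : ∑ i ∈ s, (m i : ℂ) = 0 := by exact_mod_cast hsum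
  have hsqC : ∑ i ∈ s, (m i : ℂ) ^ 2 = t + t := by exact_mod_cast ht
  have hcardC : (#s : ℂ) = r + r := by exact_mod_cast hr
  simp only [cubicGaussian, ← exp_sum]
  have hexp : ∑ i ∈ s, (-a * ((m i + k : ℤ) : ℂ) ^ 2 +
        I * (Real.pi / 2 : ℝ) * ((m i + k : ℤ) : ℂ) ^ 3) =
      ∑ i ∈ s, (-a * ((m i - k : ℤ) : ℂ) ^ 2 +
        I * (Real.pi / 2 : ℝ) * ((m i - k : ℤ) : ℂ) ^ 3) +
      ((3 * k * t + r * k ^ 3 : ℤ) : ℂ) * (2 * Real.pi * I) := by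
    rw [← sub_eq_iff_eq_add', ← sum_sub_distrib]
    calc ∑ i ∈ s, ((-a * ((m i + k : ℤ) : ℂ) ^ 2 +
            I * (Real.pi / 2 : ℝ) * ((m i + k : ℤ) : ℂ) ^ 3) -
          (-a * ((m i - k : ℤ) : ℂ) ^ 2 + I * (Real.pi / 2 : ℝ) * ((m i - k : ℤ) : ℂ) ^ 3))
        = ∑ i ∈ s, (-4 * a * k * (m i : ℂ) + Real.pi * I * 3 * k * (m i : ℂ) ^ 2
            + Real.pi * I * (k : ℂ) ^ 3) := by
          refine sum_congr rfl fun i _ ↦ ?_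
          push_cast; ring
      _ = -4 * a * k * ∑ i ∈ s, (m i : ℂ) + Real.pi * I * 3 * k * ∑ i ∈ s, (m i : ℂ) ^ 2
            + #s * (Real.pi * I * (k : ℂ) ^ 3) := by
          simp only [sum_add_distrib, mul_sum, sum_const, nsmul_eq_mul]
      _ = ((3 * k * t + r * k ^ 3 : ℤ) : ℂ) * (2 * Real.pi * I) := by
          rw [hsumC, hsqC, hcardC]; push_cast; ring
  rw [hexp, exp_add, exp_int_mul_two_pi_mul_I, mul_one]

theorem stmt19_general (a : ℝ) (f : ℤ → ℂ)
    (hf : ∀ m : ℤ, f m = Complex.exp (-(a : ℂ) * (m : ℂ) ^ 2 +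
      Complex.I * (Real.pi / 2 : ℝ) * (m : ℂ) ^ 3)) :
    (∀ (ms : Fin 4 → ℤ) (k : ℤ), (∑ j, ms j) = 0 →
      (∏ j, f (ms j + k)) = ∏ j, f (ms j - k)) ∧
    (∀ m : ℤ, ∃ c : ℝ, 0 < c ∧ f m ^ 4 = (c : ℂ)) := by
  obtain rfl : f = cubicGaussian a := funext hf
  refine ⟨fun ms k hsum ↦ prod_cubicGaussian_add_eq_prod_sub a univ ms k ⟨2, rfl⟩ hsum,
    fun m ↦ ⟨Real.exp (-4 * a * m ^ 2), Real.exp_pos _, ?_⟩⟩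
  rw [cubicGaussian_pow_four, ofReal_exp]
  push_cast
  rfl

theorem stmt19 (a : ℝ) (ha : 0 < a) (f : ℤ → ℂ)
    (hf : ∀ m : ℤ, f m = Complex.exp (-(a : ℂ) * (m : ℂ) ^ 2 +
      Complex.I * (Real.pi / 2 : ℝ) * (m : ℂ) ^ 3)) :
    (∀ (ms : Fin 4 → ℤ) (k : ℤ), (∑ j, ms j) = 0 →
      (∏ j, f (ms j + k)) = ∏ j, f (ms j - k)) ∧
    (∀ m : ℤ, ∃ c : ℝ, 0 < c ∧ f m ^ 4 = (c : ℂ)) :=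
  stmt19_general a f hf
end
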